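/- arXiv:2510.22882 — 5 statements merged into one kernel-verified Lean document; each statement's English description precedes it below -/
import Mathlib

section
/- For any m sorted (non-decreasing) sequences L_1,...,L_m of lengths n_1,...,n_m and any target rank K with 0 ≤ K ≤ n_1+...+n_m, there exist cut indices i_1,...,i_m with 0 ≤ i_t ≤ n_t, i_1+...+i_m = K, and max_t ℓ_t ≤ min_t r_t, where ℓ_t = L_t[i_t-1] if i_t > 0 and -∞ otherwise, and r_t = L_t[i_t] if i_t < n_t and +∞ otherwise. -/
/-! Greedy construction by induction on `K`: from a valid cut of rank `K < ∑ n_t`, advance the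
index of a sequence whose right boundary value is smallest. Its old right value becomes its new
left value, which is still at most every right value, and right values only grow. -/

open scoped BigOperators Classical

/-- Left boundary value `ℓ_t` of the cut: `L_t[i_t - 1]` if `i_t > 0`, else `⊥` (−∞). -/
noncomputable def lcut {m : ℕ} (n : Fin m → ℕ) (L : ∀ t, Fin (n t) → ℝ)
    (i : Fin m → ℕ) (t : Fin m) : EReal :=
  if h : 0 < i t ∧ i t ≤ n t then ((L t ⟨i t - 1, by omega⟩ : ℝ) : EReal) else ⊥

/-- Right boundary value `r_t` of the cut: `L_t[i_t]` if `i_t < n_t`, else `⊤` (+∞). -/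
noncomputable def rcut {m : ℕ} (n : Fin m → ℕ) (L : ∀ t, Fin (n t) → ℝ)
    (i : Fin m → ℕ) (t : Fin m) : EReal :=
  if h : i t < n t then ((L t ⟨i t, h⟩ : ℝ) : EReal) else ⊤

open Function

section Cuts

variable {m : ℕ} {n : Fin m → ℕ} {L : ∀ t, Fin (n t) → ℝ} {i : Fin m → ℕ}

def IsCorankCut (n : Fin m → ℕ) (L : ∀ t, Fin (n t) → ℝ) (i : Fin m → ℕ) : Prop :=
  (∀ t, i t ≤ n t) ∧ (⨆ t, lcut n L i t) ≤ ⨅ t, rcut n L i t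

theorem lcut_of_eq_zero {t : Fin m} (h : i t = 0) : lcut n L i t = ⊥ := by
  simp [lcut, h]

theorem rcut_lt_top {t : Fin m} (h : i t < n t) : rcut n L i t < ⊤ := by
  simp only [rcut, dif_pos h]
  exact EReal.coe_lt_top _

theorem rcut_of_le {t : Fin m} (h : n t ≤ i t) : rcut n L i t = ⊤ := by
  simp [rcut, h]

theorem lcut_update_of_ne {s t : Fin m} (h : t ≠ s) (k : ℕ) :
    lcut n L (update i s k) t = lcut n L i t := by
  simp only [lcut, update_of_ne h]

theorem lcut_update_succ_self {t : Fin m} (h : i t < n t) :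
    lcut n L (update i t (i t + 1)) t = rcut n L i t := by
  simp only [lcut, rcut, update_self]
  rw [dif_pos ⟨Nat.succ_pos _, h⟩, dif_pos h]
  rfl

theorem rcut_le_rcut_update_succ {s : Fin m} (hmono : Monotone (L s)) (t : Fin m) :
    rcut n L i t ≤ rcut n L (update i s (i s + 1)) t := by
  rcases eq_or_ne t s with rfl | h
  · simp only [rcut, update_self]
    by_cases h' : i t + 1 < n t
    · rw [dif_pos h', dif_pos (by omega)]
      exact EReal.coe_le_coe_iff.2 (hmono (by simp [Fin.le_def]))
    · rw [dif_neg h']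
      exact le_top
  · simp only [rcut, update_of_ne h, le_refl]

theorem isCorankCut_zero : IsCorankCut n L 0 :=
  ⟨fun _ => Nat.zero_le _, iSup_le fun _ => (lcut_of_eq_zero rfl).trans_le bot_le⟩

theorem IsCorankCut.exists_succ (hmono : ∀ t, Monotone (L t)) (hi : IsCorankCut n L i)
    (hlt : ∑ t, i t < ∑ t, n t) :
    ∃ i' : Fin m → ℕ, IsCorankCut n L i' ∧ ∑ t, i' t = ∑ t, i t + 1 := by
  obtain ⟨t₁, -, ht₁⟩ := Finset.exists_lt_of_sum_lt hlt
  have : Nonempty (Fin m) := ⟨t₁⟩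
  obtain ⟨t₀, ht₀⟩ := Finite.exists_min (rcut n L i)
  have ht₀lt : i t₀ < n t₀ := by
    by_contra! h
    exact (rcut_lt_top ht₁).not_ge ((rcut_of_le h).symm.trans_le (ht₀ t₁))
  have hr := rcut_le_rcut_update_succ (n := n) (i := i) (hmono t₀)
  refine ⟨update i t₀ (i t₀ + 1),
    ⟨fun t => ?_, iSup_le fun s => le_iInf fun u => ?_⟩, ?_⟩
  · rcases eq_or_ne t t₀ with rfl | h
    · simpa using ht₀lt
    · simpa [update_of_ne h] using hi.1 t
  · rcases eq_or_ne s t₀ with rfl | h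
    · rw [lcut_update_succ_self ht₀lt]
      exact (ht₀ u).trans (hr u)
    · rw [lcut_update_of_ne h]
      exact ((le_iSup _ s).trans (hi.2.trans (iInf_le _ u))).trans (hr u)
  · rw [Finset.sum_update_of_mem (Finset.mem_univ t₀), Finset.sdiff_singleton_eq_erase,
      ← Finset.add_sum_erase _ _ (Finset.mem_univ t₀)]
    ring

theorem exists_isCorankCut (hmono : ∀ t, Monotone (L t)) {K : ℕ} (hK : K ≤ ∑ t, n t) :
    ∃ i : Fin m → ℕ, IsCorankCut n L i ∧ ∑ t, i t = K := by
  induction K with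
  | zero => exact ⟨0, isCorankCut_zero, by simp⟩
  | succ K ih =>
    obtain ⟨i, hi, rfl⟩ := ih (by omega)
    exact hi.exists_succ hmono (by omega)

end Cuts

/-- Existence of multi-way co-rank indices. -/
theorem multiway_corank_exists {m : ℕ} (n : Fin m → ℕ) (L : ∀ t, Fin (n t) → ℝ)
    (hmono : ∀ t, Monotone (L t)) (K : ℕ) (hK : K ≤ ∑ t, n t) :
    ∃ i : Fin m → ℕ, (∀ t, i t ≤ n t) ∧ (∑ t, i t = K) ∧
      (⨆ t, lcut n L i t) ≤ ⨅ t, rcut n L i t := by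
  obtain ⟨i, ⟨hle, hcut⟩, hsum⟩ := exists_isCorankCut hmono hK
  exact ⟨i, hle, hsum, hcut⟩
end

section
/- The co-rank vector is essentially unique: if (i_1,...,i_m) and (j_1,...,j_m) both satisfy the sum condition Σ i_t = Σ j_t = K and the co-rank frontier condition max ℓ ≤ min r, then for each t, every element in the symmetric difference of prefixes L_t[0..i_t) and L_t[0..j_t) has the same value; in particular if all values across all sequences are distinct then i_t = j_t for all t. -/
open scoped BigOperators Classical

/-- Key sandwich lemma: a "case-1" element at `s` (between the `j`-cut and the
`i`-cut, with `j s < i s`) equals any "case-2" element at `t` (with `i t < j t`). -/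
theorem corank_key {m : ℕ} (n : Fin m → ℕ) (L : ∀ t, Fin (n t) → ℝ)
    (hmono : ∀ t, Monotone (L t)) (i j : Fin m → ℕ)
    (hile : ∀ t, i t ≤ n t) (hjle : ∀ t, j t ≤ n t)
    (hico : (⨆ t, lcut n L i t) ≤ ⨅ t, rcut n L i t)
    (hjco : (⨆ t, lcut n L j t) ≤ ⨅ t, rcut n L j t)
    (s t : Fin m) (a : Fin (n s)) (b : Fin (n t))
    (has : j s ≤ (a : ℕ)) (hai : (a : ℕ) < i s)
    (hbt : i t ≤ (b : ℕ)) (hbj : (b : ℕ) < j t) :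
    L s a = L t b := by
  have hjs : j s < n s := lt_of_le_of_lt has a.isLt
  have hit : i t < n t := lt_of_le_of_lt hbt b.isLt
  have hisn : i s ≤ n s := hile s
  have hjtn : j t ≤ n t := hjle t
  have halt : (a : ℕ) < n s := a.isLt
  have hblt : (b : ℕ) < n t := b.isLt
  have h1 : ((L t b : ℝ) : EReal) ≤ lcut n L j t := by
    rw [lcut, dif_pos (⟨by omega, hjle t⟩ : 0 < j t ∧ j t ≤ n t)]
    exact EReal.coe_le_coe_iff.mpr (hmono t (by simp only [Fin.le_def]; omega))
  have h2 : rcut n L j s = ((L s ⟨j s, hjs⟩ : ℝ) : EReal) := by rw [rcut, dif_pos hjs]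
  have h3 : L s ⟨j s, hjs⟩ ≤ L s a := hmono s (by simpa [Fin.le_def] using has)
  have h4 : L s a ≤ L s ⟨i s - 1, by omega⟩ := hmono s (by simp only [Fin.le_def]; omega)
  have h5 : lcut n L i s = ((L s ⟨i s - 1, by omega⟩ : ℝ) : EReal) := by
    rw [lcut, dif_pos (⟨by omega, hile s⟩ : 0 < i s ∧ i s ≤ n s)]
  have h6 : rcut n L i t = ((L t ⟨i t, hit⟩ : ℝ) : EReal) := by rw [rcut, dif_pos hit]
  have h7 : L t ⟨i t, hit⟩ ≤ L t b := hmono t (by simpa [Fin.le_def] using hbt)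
  have c1 : ((L t b : ℝ) : EReal) ≤ ((L s a : ℝ) : EReal) := by
    calc ((L t b : ℝ) : EReal) ≤ lcut n L j t := h1
      _ ≤ ⨆ u, lcut n L j u := le_iSup _ t
      _ ≤ ⨅ u, rcut n L j u := hjco
      _ ≤ rcut n L j s := iInf_le _ s
      _ = ((L s ⟨j s, hjs⟩ : ℝ) : EReal) := h2
      _ ≤ _ := EReal.coe_le_coe_iff.mpr h3
  have c2 : ((L s a : ℝ) : EReal) ≤ ((L t b : ℝ) : EReal) := by
    calc ((L s a : ℝ) : EReal) ≤ ((L s ⟨i s - 1, by omega⟩ : ℝ) : EReal) :=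
          EReal.coe_le_coe_iff.mpr h4
      _ = lcut n L i s := h5.symm
      _ ≤ ⨆ u, lcut n L i u := le_iSup _ s
      _ ≤ ⨅ u, rcut n L i u := hico
      _ ≤ rcut n L i t := iInf_le _ t
      _ = ((L t ⟨i t, hit⟩ : ℝ) : EReal) := h6
      _ ≤ _ := EReal.coe_le_coe_iff.mpr h7
  exact_mod_cast le_antisymm c2 c1

/-- essential uniqueness of the co-rank vector: elements in the
symmetric difference of the two prefixes all share the same value; if all values
are distinct then the two co-rank vectors coincide. -/
theorem corank_essentially_unique {m : ℕ} (n : Fin m → ℕ) (L : ∀ t, Fin (n t) → ℝ)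
    (hmono : ∀ t, Monotone (L t)) (K : ℕ) (i j : Fin m → ℕ)
    (hile : ∀ t, i t ≤ n t) (hjle : ∀ t, j t ≤ n t)
    (hisum : ∑ t, i t = K) (hjsum : ∑ t, j t = K)
    (hico : (⨆ t, lcut n L i t) ≤ ⨅ t, rcut n L i t)
    (hjco : (⨆ t, lcut n L j t) ≤ ⨅ t, rcut n L j t) :
    (∀ (s t : Fin m) (a : Fin (n s)) (b : Fin (n t)),
        min (i s) (j s) ≤ (a : ℕ) → (a : ℕ) < max (i s) (j s) →
        min (i t) (j t) ≤ (b : ℕ) → (b : ℕ) < max (i t) (j t) →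
        L s a = L t b) ∧
    (Function.Injective (fun x : Σ t : Fin m, Fin (n t) => L x.1 x.2) → i = j) := by
  -- existence of an opposite-direction coordinate
  have hex : ∀ s : Fin m, j s < i s → ∃ u, i u < j u := by
    intro s hs
    by_contra h
    push_neg at h
    have : ∑ t, j t < ∑ t, i t :=
      Finset.sum_lt_sum (fun t _ => h t) ⟨s, Finset.mem_univ s, hs⟩
    omega
  have hex' : ∀ s : Fin m, i s < j s → ∃ u, j u < i u := by
    intro s hs
    by_contra h
    push_neg at h
    have : ∑ t, i t < ∑ t, j t :=
      Finset.sum_lt_sum (fun t _ => h t) ⟨s, Finset.mem_univ s, hs⟩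
    omega
  have key := corank_key n L hmono i j hile hjle hico hjco
  have key' := corank_key n L hmono j i hjle hile hjco hico
  constructor
  · intro s t a b ha1 ha2 hb1 hb2
    rcases lt_trichotomy (i s) (j s) with hs | hs | hs
    · -- a is case-2 (i s ≤ a < j s)
      rw [min_eq_left hs.le] at ha1
      rw [max_eq_right hs.le] at ha2
      rcases lt_trichotomy (i t) (j t) with ht | ht | ht
      · -- both case-2: use a pivot with j u < i u
        rw [min_eq_left ht.le] at hb1
        rw [max_eq_right ht.le] at hb2
        obtain ⟨u, hu⟩ := hex' s hs
        have hju : j u < n u := lt_of_lt_of_le hu (hile u)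
        have e1 : L s a = L u ⟨j u, hju⟩ := key' s u a ⟨j u, hju⟩ ha1 ha2 (le_refl _) hu
        have e2 : L t b = L u ⟨j u, hju⟩ := key' t u b ⟨j u, hju⟩ hb1 hb2 (le_refl _) hu
        rw [e1, e2]
      · omega
      · rw [min_eq_right ht.le] at hb1
        rw [max_eq_left ht.le] at hb2
        exact (key t s b a hb1 hb2 ha1 ha2).symm
    · omega
    · -- a is case-1 (j s ≤ a < i s)
      rw [min_eq_right hs.le] at ha1
      rw [max_eq_left hs.le] at ha2
      rcases lt_trichotomy (i t) (j t) with ht | ht | ht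
      · rw [min_eq_left ht.le] at hb1
        rw [max_eq_right ht.le] at hb2
        exact key s t a b ha1 ha2 hb1 hb2
      · omega
      · -- both case-1: pivot with i u < j u
        rw [min_eq_right ht.le] at hb1
        rw [max_eq_left ht.le] at hb2
        obtain ⟨u, hu⟩ := hex s hs
        have hiu : i u < n u := lt_of_lt_of_le hu (hjle u)
        have e1 : L s a = L u ⟨i u, hiu⟩ := key s u a ⟨i u, hiu⟩ ha1 ha2 (le_refl _) hu
        have e2 : L t b = L u ⟨i u, hiu⟩ := key t u b ⟨i u, hiu⟩ hb1 hb2 (le_refl _) hu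
        rw [e1, e2]
  · intro hinj
    funext s
    by_contra hne
    rcases lt_trichotomy (i s) (j s) with hs | hs | hs
    · obtain ⟨u, hu⟩ := hex' s hs
      have his : i s < n s := lt_of_lt_of_le hs (hjle s)
      have hju : j u < n u := lt_of_lt_of_le hu (hile u)
      have e : L s ⟨i s, his⟩ = L u ⟨j u, hju⟩ :=
        key' s u ⟨i s, his⟩ ⟨j u, hju⟩ (le_refl _) hs (le_refl _) hu
      have := hinj (show (fun x : Σ t : Fin m, Fin (n t) => L x.1 x.2) ⟨s, ⟨i s, his⟩⟩ =
          (fun x : Σ t : Fin m, Fin (n t) => L x.1 x.2) ⟨u, ⟨j u, hju⟩⟩ from e)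
      obtain ⟨h1, h2⟩ := Sigma.mk.inj_iff.mp this
      subst h1
      have := Fin.mk.injEq _ _ _ _ ▸ eq_of_heq h2
      omega
    · exact hne hs
    · obtain ⟨u, hu⟩ := hex s hs
      have hjs : j s < n s := lt_of_lt_of_le hs (hile s)
      have hiu : i u < n u := lt_of_lt_of_le hu (hjle u)
      have e : L s ⟨j s, hjs⟩ = L u ⟨i u, hiu⟩ :=
        key s u ⟨j s, hjs⟩ ⟨i u, hiu⟩ (le_refl _) hs (le_refl _) hu
      have := hinj (show (fun x : Σ t : Fin m, Fin (n t) => L x.1 x.2) ⟨s, ⟨j s, hjs⟩⟩ =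
          (fun x : Σ t : Fin m, Fin (n t) => L x.1 x.2) ⟨u, ⟨i u, hiu⟩⟩ from e)
      obtain ⟨h1, h2⟩ := Sigma.mk.inj_iff.mp this
      subst h1
      have := Fin.mk.injEq _ _ _ _ ▸ eq_of_heq h2
      omega
end

section
/- Monotonicity of co-ranks in K: if (i_1,...,i_m) is a co-rank vector at rank K and (j_1,...,j_m) is a co-rank vector at rank K' with K ≤ K', and all values across all sequences are distinct, then i_t ≤ j_t for every t. -/
/-!
If some co-rank dropped, `j t < i t`, then since `∑ i ≤ ∑ j` another one rose, `i s < j s`.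
The two cut conditions and monotonicity of the sequences then trap a single value:
`L_s[i_s] ≤ L_s[j_s - 1] ≤ L_t[j_t] ≤ L_t[i_t - 1] ≤ L_s[i_s]`, so the entries `L_s[i_s]` and
`L_t[j_t]` of two different sequences coincide, contradicting distinctness.
-/

open scoped BigOperators Classical

theorem Finset.exists_lt_of_sum_le_of_lt {ι M : Type*} [AddCommMonoid M] [LinearOrder M]
    [IsOrderedCancelAddMonoid M] {s : Finset ι} {f g : ι → M} {t : ι}
    (hle : ∑ i ∈ s, f i ≤ ∑ i ∈ s, g i) (ht : t ∈ s) (hlt : g t < f t) :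
    ∃ i ∈ s, f i < g i := by
  contrapose! hle
  exact Finset.sum_lt_sum hle ⟨t, ht, hlt⟩

section Cut

variable {m : ℕ} {n : Fin m → ℕ} {L : ∀ t, Fin (n t) → ℝ} {i : Fin m → ℕ}

theorem lcut_of_pos {t : Fin m} (hpos : 0 < i t) (hle : i t ≤ n t) :
    lcut n L i t = L t ⟨i t - 1, by omega⟩ :=
  dif_pos ⟨hpos, hle⟩

theorem rcut_of_lt {t : Fin m} (hlt : i t < n t) : rcut n L i t = L t ⟨i t, hlt⟩ :=
  dif_pos hlt

theorem lcut_le_rcut_of_iSup_le_iInf (hcut : (⨆ t, lcut n L i t) ≤ ⨅ t, rcut n L i t)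
    {t s : Fin m} (hpos : 0 < i t) (hle : i t ≤ n t) (hlt : i s < n s) :
    L t ⟨i t - 1, by omega⟩ ≤ L s ⟨i s, hlt⟩ := by
  have h := (le_iSup (lcut n L i) t).trans (hcut.trans (iInf_le (rcut n L i) s))
  rwa [lcut_of_pos hpos hle, rcut_of_lt hlt, EReal.coe_le_coe_iff] at h

theorem not_lt_of_lt_of_iSup_le_iInf (hmono : ∀ t, Monotone (L t))
    (hinj : Function.Injective (fun x : Σ t : Fin m, Fin (n t) => L x.1 x.2))
    {j : Fin m → ℕ} (hico : (⨆ t, lcut n L i t) ≤ ⨅ t, rcut n L i t)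
    (hjco : (⨆ t, lcut n L j t) ≤ ⨅ t, rcut n L j t)
    {s t : Fin m} (hit : i t ≤ n t) (hjs : j s ≤ n s) (hs : i s < j s) : ¬ j t < i t := by
  intro ht
  have his : i s < n s := hs.trans_le hjs
  have hjt : j t < n t := ht.trans_le hit
  have hi : L t ⟨i t - 1, by omega⟩ ≤ L s ⟨i s, his⟩ :=
    lcut_le_rcut_of_iSup_le_iInf hico (by omega) hit his
  have hj : L s ⟨j s - 1, by omega⟩ ≤ L t ⟨j t, hjt⟩ :=
    lcut_le_rcut_of_iSup_le_iInf hjco (by omega) hjs hjt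
  have hLs : L s ⟨i s, his⟩ ≤ L s ⟨j s - 1, by omega⟩ := hmono s (Fin.mk_le_mk.2 (by omega))
  have hLt : L t ⟨j t, hjt⟩ ≤ L t ⟨i t - 1, by omega⟩ := hmono t (Fin.mk_le_mk.2 (by omega))
  have heq := hinj (a₁ := ⟨s, i s, his⟩) (a₂ := ⟨t, j t, hjt⟩)
    (le_antisymm (hLs.trans hj) (hLt.trans hi))
  have hst : s = t := congrArg Sigma.fst heq
  subst hst
  omega

end Cut

/-- monotonicity of co-ranks in `K` under distinct values. -/
theorem corank_monotone_in_rank {m : ℕ} (n : Fin m → ℕ) (L : ∀ t, Fin (n t) → ℝ)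
    (hmono : ∀ t, Monotone (L t))
    (hinj : Function.Injective (fun x : Σ t : Fin m, Fin (n t) => L x.1 x.2))
    (K K' : ℕ) (hKK' : K ≤ K') (i j : Fin m → ℕ)
    (hile : ∀ t, i t ≤ n t) (hjle : ∀ t, j t ≤ n t)
    (hisum : ∑ t, i t = K) (hjsum : ∑ t, j t = K')
    (hico : (⨆ t, lcut n L i t) ≤ ⨅ t, rcut n L i t)
    (hjco : (⨆ t, lcut n L j t) ≤ ⨅ t, rcut n L j t) :
    ∀ t, i t ≤ j t := by
  intro t
  by_contra! ht
  obtain ⟨s, -, hs⟩ := Finset.exists_lt_of_sum_le_of_lt (hisum.trans_le (hKK'.trans hjsum.ge))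
    (Finset.mem_univ t) ht
  exact not_lt_of_lt_of_iSup_le_iInf hmono hinj hico hjco (hile t) (hjle s) hs ht
end

section
/- Selection correctness: if (i_1,...,i_m) is a valid co-rank vector at rank K ≥ 1 and all values are distinct, then the maximum of the prefix values max { L_t[a] : a < i_t, t ∈ [m] } (over nonempty prefixes) equals the K-th smallest element of the combined multiset of all sequence values. -/
open scoped BigOperators Classical

/-! A valid co-rank vector splits the combined multiset into the `K` prefix elements and the rest,
and the cut condition `max ℓ ≤ min r` puts every prefix element below every suffix element.
So the elements strictly below the largest prefix element are exactly the other `K - 1` prefix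
elements. -/

open Finset Function

theorem Finset.filter_lt_eq_erase_of_isMax {α β : Type*} [Fintype α] [DecidableEq α]
    [LinearOrder β] {f : α → β} (hf : Injective f) {P : Finset α} {x : α}
    (hmax : ∀ y ∈ P, f y ≤ f x) (hout : ∀ y ∉ P, f x ≤ f y) :
    ({y | f y < f x} : Finset α) = P.erase x := by
  ext y
  simp only [mem_filter, mem_univ, true_and, mem_erase]
  constructor
  · intro hy
    exact ⟨fun h => hy.ne (h ▸ rfl), by_contra fun h => (hout y h).not_gt hy⟩
  · rintro ⟨hne, hy⟩
    exact (hmax y hy).lt_of_ne (hf.ne hne)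

section CoRank

variable {m : ℕ} {n : Fin m → ℕ} {L : ∀ t, Fin (n t) → ℝ} {i : Fin m → ℕ}

variable (n i) in
def prefixSet : Finset (Σ t : Fin m, Fin (n t)) := {x | (x.2 : ℕ) < i x.1}

@[simp]
lemma mem_prefixSet {x : Σ t : Fin m, Fin (n t)} :
    x ∈ prefixSet n i ↔ (x.2 : ℕ) < i x.1 := by
  simp [prefixSet]

lemma card_prefixSet (hle : ∀ t, i t ≤ n t) : #(prefixSet n i) = ∑ t, i t := by
  have : prefixSet n i = univ.sigma fun t => ({b | (b : ℕ) < i t} : Finset (Fin (n t))) := by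
    ext x; simp
  rw [this, card_sigma]
  exact sum_congr rfl fun t _ => by rw [Fin.card_filter_val_lt, min_eq_right (hle t)]

lemma coe_le_lcut {s : Fin m} (hmono : Monotone (L s)) (hle : i s ≤ n s) {a : Fin (n s)}
    (ha : (a : ℕ) < i s) : (L s a : EReal) ≤ lcut n L i s := by
  rw [lcut, dif_pos ⟨by omega, hle⟩]
  exact EReal.coe_le_coe_iff.2 (hmono (Fin.le_def.2 (Nat.le_sub_one_of_lt ha)))

lemma rcut_le_coe {t : Fin m} (hmono : Monotone (L t)) {b : Fin (n t)} (hb : i t ≤ b) :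
    rcut n L i t ≤ (L t b : EReal) := by
  rw [rcut, dif_pos (hb.trans_lt b.isLt)]
  exact EReal.coe_le_coe_iff.2 (hmono (Fin.le_def.2 hb))

lemma prefix_le_suffix (hmono : ∀ t, Monotone (L t)) (hle : ∀ t, i t ≤ n t)
    (hco : (⨆ t, lcut n L i t) ≤ ⨅ t, rcut n L i t) {s t : Fin m} {a : Fin (n s)}
    {b : Fin (n t)} (ha : (a : ℕ) < i s) (hb : i t ≤ b) : L s a ≤ L t b :=
  EReal.coe_le_coe_iff.1 <| calc
    (L s a : EReal) ≤ lcut n L i s := coe_le_lcut (hmono s) (hle s) ha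
    _ ≤ ⨆ t, lcut n L i t := le_iSup _ s
    _ ≤ ⨅ t, rcut n L i t := hco
    _ ≤ rcut n L i t := iInf_le _ t
    _ ≤ L t b := rcut_le_coe (hmono t) hb

end CoRank

/-- selection correctness: the maximum over the (nonempty) prefixes
of a valid co-rank vector at rank `K ≥ 1` is the `K`-th smallest element of the
combined multiset: exactly `K − 1` elements are strictly smaller. -/
theorem selection_correctness {m : ℕ} (n : Fin m → ℕ) (L : ∀ t, Fin (n t) → ℝ)
    (hmono : ∀ t, Monotone (L t))
    (hinj : Function.Injective (fun x : Σ t : Fin m, Fin (n t) => L x.1 x.2))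
    (K : ℕ) (hK : 1 ≤ K) (i : Fin m → ℕ)
    (hle : ∀ t, i t ≤ n t) (hsum : ∑ t, i t = K)
    (hco : (⨆ t, lcut n L i t) ≤ ⨅ t, rcut n L i t) :
    ∃ (s : Fin m) (a : Fin (n s)), (a : ℕ) < i s ∧
      (∀ (t : Fin m) (b : Fin (n t)), (b : ℕ) < i t → L t b ≤ L s a) ∧
      (Finset.univ.filter
        (fun x : Σ t : Fin m, Fin (n t) => L x.1 x.2 < L s a)).card = K - 1 := by
  have hcard : #(prefixSet n i) = K := (card_prefixSet hle).trans hsum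
  obtain ⟨⟨s, a⟩, hx, hmax⟩ :=
    (prefixSet n i).exists_max_image (fun x => L x.1 x.2) (card_pos.1 (by omega))
  refine ⟨s, a, mem_prefixSet.1 hx, fun t b hb => hmax ⟨t, b⟩ (mem_prefixSet.2 hb), ?_⟩
  rw [filter_lt_eq_erase_of_isMax hinj hmax fun y hy =>
      prefix_le_suffix hmono hle hco (mem_prefixSet.1 hx) (not_lt.1 (mt mem_prefixSet.2 hy)),
    card_erase_of_mem hx, hcard]
end

section
/- Exchange step for transfer sequences: if a sequence of two feasible unit transfers consists of a non-extremal transfer (u,v) followed by an extremal transfer (p,q) (where p maximizes ℓ and q minimizes r in the initial state), and both composite states are feasible, then performing the extremal transfer first yields, after the first step, a state whose potential max ℓ − min r is less than or equal to that after the non-extremal transfer; and the final state after both transfers is the same vector whenever {u,v} ∩ {p,q} = ∅. -/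
/-!
A unit transfer `(a, b)` lowers the cut in list `a` and raises it in list `b`: the new `ℓ_b` is
the old `r_b`, the new `r_a` is the old `ℓ_a`, and every other boundary value moves monotonically
(sortedness of the lists), while `ℓ_t ≤ r_t` always. After the extremal transfer the new left value
`ℓ_q = r_q(i) ≤ r_v(i)` is the new `ℓ_v` after `(u, v)`; every other left value is at most
`ℓ_p(i)`, which the transfer `(u, v)` does not lower unless `u = p`, and then both transfers lower
`ℓ_p` alike. The bound on `min r` is dual, and transfers with disjoint supports commute.
-/

open scoped BigOperators Classical

/-- A unit transfer moving one unit of index mass from list `a` to list `b`. -/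
def transfer {m : ℕ} (i : Fin m → ℕ) (a b : Fin m) : Fin m → ℕ :=
  Function.update (Function.update i a (i a - 1)) b (i b + 1)

section Transfer

variable {m : ℕ} {i : Fin m → ℕ} {a b c d t : Fin m}

lemma transfer_apply_src (hab : a ≠ b) : transfer i a b a = i a - 1 := by
  simp [transfer, Function.update_of_ne hab]

lemma transfer_apply_tgt : transfer i a b b = i b + 1 := by
  simp [transfer]

lemma transfer_apply_le (htb : t ≠ b) : transfer i a b t ≤ i t := by
  simp only [transfer, Function.update_apply, htb, if_false]
  split_ifs with hta
  · subst hta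
    omega
  · exact le_rfl

lemma le_transfer_apply (hta : t ≠ a) : i t ≤ transfer i a b t := by
  simp only [transfer, Function.update_apply, hta, if_false]
  split_ifs with htb
  · subst htb
    omega
  · exact le_rfl

lemma transfer_transfer_comm (hac : a ≠ c) (had : a ≠ d) (hbc : b ≠ c) (hbd : b ≠ d) :
    transfer (transfer i a b) c d = transfer (transfer i c d) a b := by
  funext t
  simp only [transfer, Function.update_apply]
  split_ifs <;> simp_all

end Transfer

section Cuts

variable {m : ℕ} {n : Fin m → ℕ} {L : ∀ t, Fin (n t) → ℝ} {i j : Fin m → ℕ} {a b t : Fin m}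

lemma lcut_congr (h : i t = j t) : lcut n L i t = lcut n L j t := by
  simp only [lcut, h]

lemma rcut_congr (h : i t = j t) : rcut n L i t = rcut n L j t := by
  simp only [rcut, h]

lemma lcut_le_lcut (hmono : ∀ t, Monotone (L t)) (h : i t ≤ j t) (hj : j t ≤ n t) :
    lcut n L i t ≤ lcut n L j t := by
  unfold lcut
  split_ifs with hi hj'
  · exact EReal.coe_le_coe_iff.2 (hmono t (by simp only [Fin.mk_le_mk]; omega))
  · exact absurd ⟨by omega, hj⟩ hj'
  · exact bot_le
  · exact le_rfl

lemma rcut_le_rcut (hmono : ∀ t, Monotone (L t)) (h : i t ≤ j t) :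
    rcut n L i t ≤ rcut n L j t := by
  unfold rcut
  split_ifs with hi hj
  · exact EReal.coe_le_coe_iff.2 (hmono t (by simp only [Fin.mk_le_mk]; omega))
  · exact le_top
  · exact absurd (by omega) hi
  · exact le_rfl

lemma lcut_le_rcut (hmono : ∀ t, Monotone (L t)) : lcut n L i t ≤ rcut n L i t := by
  unfold lcut rcut
  split_ifs
  · exact EReal.coe_le_coe_iff.2 (hmono t (by simp only [Fin.mk_le_mk]; omega))
  · exact le_top
  · exact bot_le
  · exact bot_le

lemma lcut_transfer_tgt (hb : i b < n b) : lcut n L (transfer i a b) b = rcut n L i b := by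
  unfold lcut rcut
  simp only [transfer_apply_tgt, Nat.add_sub_cancel]
  rw [dif_pos (by omega), dif_pos hb]

lemma rcut_transfer_src (hab : a ≠ b) (ha : 1 ≤ i a) (ha' : i a ≤ n a) :
    rcut n L (transfer i a b) a = lcut n L i a := by
  unfold lcut rcut
  simp only [transfer_apply_src hab]
  rw [dif_pos (show i a - 1 < n a by omega), dif_pos ⟨ha, ha'⟩]

lemma lcut_transfer_le (hmono : ∀ t, Monotone (L t)) (ht : i t ≤ n t) (htb : t ≠ b) :
    lcut n L (transfer i a b) t ≤ lcut n L i t :=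
  lcut_le_lcut hmono (transfer_apply_le htb) ht

lemma le_lcut_transfer (hmono : ∀ t, Monotone (L t)) (ht : i t ≤ n t) (hb : i b < n b)
    (hta : t ≠ a) : lcut n L i t ≤ lcut n L (transfer i a b) t := by
  refine lcut_le_lcut hmono (le_transfer_apply hta) ?_
  by_cases htb : t = b
  · subst htb
    rw [transfer_apply_tgt]
    omega
  · exact (transfer_apply_le htb).trans ht

lemma rcut_transfer_le (hmono : ∀ t, Monotone (L t)) (htb : t ≠ b) :
    rcut n L (transfer i a b) t ≤ rcut n L i t :=
  rcut_le_rcut hmono (transfer_apply_le htb)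

lemma le_rcut_transfer (hmono : ∀ t, Monotone (L t)) (hta : t ≠ a) :
    rcut n L i t ≤ rcut n L (transfer i a b) t :=
  rcut_le_rcut hmono (le_transfer_apply hta)

end Cuts

section Exchange

variable {m : ℕ} {n : Fin m → ℕ} {L : ∀ t, Fin (n t) → ℝ} {i : Fin m → ℕ} {u v p q : Fin m}

lemma iSup_lcut_transfer_le_of_max (hmono : ∀ t, Monotone (L t)) (hle : ∀ t, i t ≤ n t)
    (huv : u ≠ v) (hpq : p ≠ q) (hpmax : ∀ t, lcut n L i t ≤ lcut n L i p)
    (hqmin : ∀ t, rcut n L i q ≤ rcut n L i t) (hv : i v < n v) (hq : i q < n q) :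
    (⨆ t, lcut n L (transfer i p q) t) ≤ ⨆ t, lcut n L (transfer i u v) t := by
  refine iSup_le fun t => ?_
  by_cases htq : t = q
  · subst htq
    calc lcut n L (transfer i p t) t = rcut n L i t := lcut_transfer_tgt hq
      _ ≤ rcut n L i v := hqmin v
      _ = lcut n L (transfer i u v) v := (lcut_transfer_tgt hv).symm
      _ ≤ _ := le_iSup _ v
  by_cases htu : t = u
  · subst htu
    by_cases htp : t = p
    · subst htp
      calc lcut n L (transfer i t q) t = lcut n L (transfer i t v) t :=
            lcut_congr (by rw [transfer_apply_src hpq, transfer_apply_src huv])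
        _ ≤ _ := le_iSup _ t
    · calc lcut n L (transfer i p q) t ≤ lcut n L i t := lcut_transfer_le hmono (hle t) htq
        _ ≤ lcut n L i p := hpmax t
        _ ≤ lcut n L (transfer i t v) p := le_lcut_transfer hmono (hle p) hv (Ne.symm htp)
        _ ≤ _ := le_iSup _ p
  · calc lcut n L (transfer i p q) t ≤ lcut n L i t := lcut_transfer_le hmono (hle t) htq
      _ ≤ lcut n L (transfer i u v) t := le_lcut_transfer hmono (hle t) hv htu
      _ ≤ _ := le_iSup _ t

lemma le_iInf_rcut_transfer_of_min (hmono : ∀ t, Monotone (L t)) (hle : ∀ t, i t ≤ n t)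
    (huv : u ≠ v) (hpq : p ≠ q) (hpmax : ∀ t, lcut n L i t ≤ lcut n L i p)
    (hqmin : ∀ t, rcut n L i q ≤ rcut n L i t) (hu : 1 ≤ i u) (hp : 1 ≤ i p) :
    (⨅ t, rcut n L (transfer i u v) t) ≤ ⨅ t, rcut n L (transfer i p q) t := by
  refine le_iInf fun t => ?_
  by_cases htp : t = p
  · subst htp
    calc (⨅ s, rcut n L (transfer i u v) s) ≤ rcut n L (transfer i u v) u := iInf_le _ u
      _ = lcut n L i u := rcut_transfer_src huv hu (hle u)
      _ ≤ lcut n L i t := hpmax u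
      _ = rcut n L (transfer i t q) t := (rcut_transfer_src hpq hp (hle t)).symm
  by_cases htv : t = v
  · subst htv
    by_cases htq : t = q
    · subst htq
      calc (⨅ s, rcut n L (transfer i u t) s) ≤ rcut n L (transfer i u t) t := iInf_le _ t
        _ = rcut n L (transfer i p t) t :=
          rcut_congr (by rw [transfer_apply_tgt, transfer_apply_tgt])
    · calc (⨅ s, rcut n L (transfer i u t) s) ≤ rcut n L (transfer i u t) q := iInf_le _ q
        _ ≤ rcut n L i q := rcut_transfer_le hmono (Ne.symm htq)
        _ ≤ rcut n L i t := hqmin t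
        _ ≤ rcut n L (transfer i p q) t := le_rcut_transfer hmono htp
  · calc (⨅ s, rcut n L (transfer i u v) s) ≤ rcut n L (transfer i u v) t := iInf_le _ t
      _ ≤ rcut n L i t := rcut_transfer_le hmono htv
      _ ≤ rcut n L (transfer i p q) t := le_rcut_transfer hmono htp

end Exchange

theorem exchange_step_for_transfers_general {m : ℕ} (n : Fin m → ℕ) (L : ∀ t, Fin (n t) → ℝ)
    (hmono : ∀ t, Monotone (L t)) (i : Fin m → ℕ) (hle : ∀ t, i t ≤ n t)
    (u v p q : Fin m) (huv : u ≠ v) (hpq : p ≠ q)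
    (hpmax : ∀ t, lcut n L i t ≤ lcut n L i p)
    (hqmin : ∀ t, rcut n L i q ≤ rcut n L i t)
    (hu : 1 ≤ i u) (hv : i v < n v) (hp : 1 ≤ i p) (hq : i q < n q) :
    ((⨆ t, lcut n L (transfer i p q) t) ≤ ⨆ t, lcut n L (transfer i u v) t) ∧
    ((⨅ t, rcut n L (transfer i u v) t) ≤ ⨅ t, rcut n L (transfer i p q) t) ∧
    (u ≠ p → u ≠ q → v ≠ p → v ≠ q →
      transfer (transfer i u v) p q = transfer (transfer i p q) u v) :=
  ⟨iSup_lcut_transfer_le_of_max hmono hle huv hpq hpmax hqmin hv hq,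
    le_iInf_rcut_transfer_of_min hmono hle huv hpq hpmax hqmin hu hp,
    fun hup huq hvp hvq => transfer_transfer_comm hup huq hvp hvq⟩

/-- exchange step: performing the extremal transfer `(p,q)` first
yields a potential (componentwise on `(max ℓ, −min r)`) no worse than performing
the other transfer `(u,v)` first, and when `{u,v} ∩ {p,q} = ∅` the final state
after both transfers is the same vector. -/
theorem exchange_step_for_transfers {m : ℕ} (n : Fin m → ℕ) (L : ∀ t, Fin (n t) → ℝ)
    (hmono : ∀ t, Monotone (L t)) (i : Fin m → ℕ) (hle : ∀ t, i t ≤ n t)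
    (u v p q : Fin m) (huv : u ≠ v) (hpq : p ≠ q)
    (hpmax : ∀ t, lcut n L i t ≤ lcut n L i p)
    (hqmin : ∀ t, rcut n L i q ≤ rcut n L i t)
    (hu : 1 ≤ i u) (hv : i v < n v) (hp : 1 ≤ i p) (hq : i q < n q)
    (hfeas1 : 1 ≤ transfer i u v p) (hfeas2 : transfer i u v q < n q)
    (hfeas3 : 1 ≤ transfer i p q u) (hfeas4 : transfer i p q v < n v) :
    ((⨆ t, lcut n L (transfer i p q) t) ≤ ⨆ t, lcut n L (transfer i u v) t) ∧
    ((⨅ t, rcut n L (transfer i u v) t) ≤ ⨅ t, rcut n L (transfer i p q) t) ∧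
    (u ≠ p → u ≠ q → v ≠ p → v ≠ q →
      transfer (transfer i u v) p q = transfer (transfer i p q) u v) :=
  exchange_step_for_transfers_general n L hmono i hle u v p q huv hpq hpmax hqmin hu hv hp hq
end
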